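/- For every k ∈ ℕ, the canonical bilinear map J_k × H → H_T^k, (A, f) ↦ A·f, is well defined and continuous; more precisely, for every A ∈ J_k and f ∈ H one has Af ∈ H_T^k and q_k(Af) ≤ p_k(A)·‖f‖. -/
import Mathlib


open ContinuousLinearMap
open scoped Classical

variable {H : Type*} [NormedAddCommGroup H] [InnerProductSpace ℂ H] [CompleteSpace H]

/-- `ω^ℓ(A) := T ∘ A`, as a bounded operator, when `A(H) ⊆ D(T)` and `T ∘ A` is
bounded; junk value `0` otherwise. -/
noncomputable def omegaL (T : H →ₗ.[ℂ] H) (A : H →L[ℂ] H) : H →L[ℂ] H :=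
  if h : ∃ L : H →L[ℂ] H, ∀ f : H, (A f, L f) ∈ T.graph then h.choose else 0

/-- `ω^r(A)`: the bounded extension of `f ↦ A (T f)`, when it exists;
junk value `0` otherwise. -/
noncomputable def omegaR (T : H →ₗ.[ℂ] H) (A : H →L[ℂ] H) : H →L[ℂ] H :=
  if h : ∃ R : H →L[ℂ] H, ∀ f : T.domain, R ↑f = A (T f) then h.choose else 0

/-- `ω^{ℓ,r}(A)`: the bounded extension of `f ↦ T (A (T f))`, when it exists;
junk value `0` otherwise. -/
noncomputable def omegaLR (T : H →ₗ.[ℂ] H) (A : H →L[ℂ] H) : H →L[ℂ] H :=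
  if h : ∃ S : H →L[ℂ] H, ∀ f : T.domain, (A (T f), S ↑f) ∈ T.graph then h.choose else 0

/-- The scale of semi-ideals `J_k = J_k(T)` inside `𝔄`: `J_0 = 𝔄` and
`A ∈ J_{k+1}` iff `A ∈ J_k`, the operators `ω^ℓ(A), ω^r(A), ω^{ℓ,r}(A)` exist
(as bounded operators) and belong to `J_k`. -/
def Jset (T : H →ₗ.[ℂ] H) (𝔄 : Set (H →L[ℂ] H)) : ℕ → Set (H →L[ℂ] H)
  | 0 => 𝔄
  | (k + 1) =>
    { A | A ∈ Jset T 𝔄 k ∧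
      (∃ L : H →L[ℂ] H, ∀ f : H, (A f, L f) ∈ T.graph) ∧
      (∃ R : H →L[ℂ] H, ∀ f : T.domain, R ↑f = A (T f)) ∧
      (∃ S : H →L[ℂ] H, ∀ f : T.domain, (A (T f), S ↑f) ∈ T.graph) ∧
      omegaL T A ∈ Jset T 𝔄 k ∧ omegaR T A ∈ Jset T 𝔄 k ∧ omegaLR T A ∈ Jset T 𝔄 k }

/-- The norms `p_k`: `p_0(A) = ‖A‖` and
`p_{k+1}(A) = p_k(A) + p_k(ω^ℓ(A)) + p_k(ω^r(A)) + p_k(ω^{ℓ,r}(A))`. -/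
noncomputable def pnorm (T : H →ₗ.[ℂ] H) : ℕ → (H →L[ℂ] H) → ℝ
  | 0, A => ‖A‖
  | (k + 1), A =>
      pnorm T k A + pnorm T k (omegaL T A) + pnorm T k (omegaR T A) +
        pnorm T k (omegaLR T A)

/-- `T f`, extended by the junk value `0` outside `D(T)`. -/
noncomputable def Tfun (T : H →ₗ.[ℂ] H) (f : H) : H :=
  if h : ∃ g : H, (f, g) ∈ T.graph then h.choose else 0

/-- The Sobolev scale of `T`: `H_T^0 = H`, `H_T^1 = D(T)`, and
`H_T^{k+1} = {f ∈ H_T^k : f ∈ D(T) and T f ∈ H_T^k}`. -/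
def HTset (T : H →ₗ.[ℂ] H) : ℕ → Set H
  | 0 => Set.univ
  | (k + 1) => { f | f ∈ HTset T k ∧ (∃ g : H, (f, g) ∈ T.graph) ∧ Tfun T f ∈ HTset T k }

/-- The iterated graph norms `q_k`: `q_0(f) = ‖f‖` and `q_{k+1}(f) = q_k(f) + q_k(T f)`. -/
noncomputable def qnorm (T : H →ₗ.[ℂ] H) : ℕ → H → ℝ
  | 0, f => ‖f‖
  | (k + 1), f => qnorm T k f + qnorm T k (Tfun T f)

private lemma graph_unique (T : H →ₗ.[ℂ] H) {x y1 y2 : H}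
    (h1 : (x, y1) ∈ T.graph) (h2 : (x, y2) ∈ T.graph) : y1 = y2 := by
  rw [LinearPMap.mem_graph_iff] at h1 h2
  obtain ⟨a, ha1, ha2⟩ := h1
  obtain ⟨b, hb1, hb2⟩ := h2
  have : a = b := Subtype.ext (by simp [ha1, hb1])
  simp only [Prod.snd] at ha2 hb2
  rw [← ha2, ← hb2, this]

private lemma omegaL_spec (T : H →ₗ.[ℂ] H) (A : H →L[ℂ] H)
    (h : ∃ L : H →L[ℂ] H, ∀ f : H, (A f, L f) ∈ T.graph) :
    ∀ f : H, (A f, omegaL T A f) ∈ T.graph := by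
  rw [omegaL, dif_pos h]; exact h.choose_spec

private lemma Tfun_spec (T : H →ₗ.[ℂ] H) (f : H)
    (h : ∃ g : H, (f, g) ∈ T.graph) : (f, Tfun T f) ∈ T.graph := by
  rw [Tfun, dif_pos h]; exact h.choose_spec

private lemma pnorm_nonneg (T : H →ₗ.[ℂ] H) (k : ℕ) (A : H →L[ℂ] H) :
    0 ≤ pnorm T k A := by
  induction k generalizing A with
  | zero => exact norm_nonneg A
  | succ k ih =>
    have := ih A; have := ih (omegaL T A); have := ih (omegaR T A)
    have := ih (omegaLR T A)
    simp only [pnorm]; linarith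

/-- For every `k`, the canonical bilinear map `J_k × H → H_T^k`, `(A, f) ↦ A f`, is well
defined and continuous: `A f ∈ H_T^k` and `q_k(A f) ≤ p_k(A)·‖f‖`. -/
theorem statement12 (T : H →ₗ.[ℂ] H) (hdense : Dense (T.domain : Set H))
    (hTclosed : IsClosed (T.graph : Set (H × H)))
    (𝔄 : Subalgebra ℂ (H →L[ℂ] H)) (h𝔄closed : IsClosed (𝔄 : Set (H →L[ℂ] H)))
    (h𝔄star : ∀ A ∈ 𝔄, ContinuousLinearMap.adjoint A ∈ 𝔄) (k : ℕ)
    (A : H →L[ℂ] H) (hA : A ∈ Jset T ↑𝔄 k) (f : H) :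
    A f ∈ HTset T k ∧ qnorm T k (A f) ≤ pnorm T k A * ‖f‖ := by
  induction k generalizing A f with
  | zero =>
    refine ⟨trivial, ?_⟩
    simpa [qnorm, pnorm] using A.le_opNorm f
  | succ k ih =>
    obtain ⟨hAk, hL, hR, hS, hLk, hRk, hSk⟩ := hA
    have hmem : ∃ g : H, (A f, g) ∈ T.graph := by
      obtain ⟨L, hLspec⟩ := hL
      exact ⟨L f, hLspec f⟩
    have hTfun : Tfun T (A f) = omegaL T A f :=
      graph_unique T (Tfun_spec T (A f) hmem) (omegaL_spec T A hL f)
    obtain ⟨h1, h2⟩ := ih A hAk f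
    obtain ⟨h3, h4⟩ := ih (omegaL T A) hLk f
    refine ⟨⟨h1, hmem, hTfun ▸ h3⟩, ?_⟩
    have h5 := pnorm_nonneg T k (omegaR T A)
    have h6 := pnorm_nonneg T k (omegaLR T A)
    have hf := norm_nonneg f
    simp only [qnorm, pnorm, hTfun]
    nlinarith
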